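/- (O(n)-invariance of the DC component.) For every R ∈ O(n) and every input X ∈ ℝ^{n+2}, the sum of the components of the output of the equivariant hypersphere is O(n)-invariant: 𝟙_{n+1}ᵀ · (B · (D₂(R) · X)) = 𝟙_{n+1}ᵀ · (B · X), where 𝟙_{n+1} ∈ ℝ^{n+1} is the all-ones vector. -/

import Mathlib

/-!
The columns of `B` indexed by the first `n` coordinates sum to
`R_Oᵀ (∑ᵢ Tᵢ R_O c₀) = ‖c₀‖ R_Oᵀ (∑ᵢ pᵢ) = 0`, because the vertices of the regular simplex are
centred at the origin. Hence `𝟙ᵀ B` vanishes on the block on which `D₂(R)` acts, and so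
`𝟙ᵀ B D₂(R) = 𝟙ᵀ B`.
-/

/-- κ = −(1+√(n+1))/n^{3/2} -/
noncomputable def simplexKappa (n : ℕ) : ℝ :=
  -(1 + Real.sqrt (n + 1)) / (n : ℝ) ^ ((3 : ℝ) / 2)

/-- μ = √(1 + 1/n) -/
noncomputable def simplexMu (n : ℕ) : ℝ := Real.sqrt (1 + 1 / n)

/-- The vertices p_1, …, p_{n+1} ∈ ℝ^n of the regular n-simplex (0-indexed by `Fin (n+1)`):
`p_1 = n^{-1/2}·𝟙` and `p_i = κ·𝟙 + μ·e_{i-1}` for `2 ≤ i ≤ n+1`. -/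
noncomputable def simplexVertex (n : ℕ) (i : Fin (n + 1)) : EuclideanSpace ℝ (Fin n) :=
  WithLp.toLp 2 fun j =>
    if (i : ℕ) = 0 then (n : ℝ) ^ (-(1 : ℝ) / 2)
    else simplexKappa n + (if (j : ℕ) = (i : ℕ) - 1 then simplexMu n else 0)

open Matrix

/-- The (n+1)×(n+1) change-of-basis matrix M_n whose i-th column is
m_i = (1/p)·(p_i, n^{-1/2}) with p = √(1 + 1/n). -/
noncomputable def simplexM (n : ℕ) : Matrix (Fin (n + 1)) (Fin (n + 1)) ℝ :=
  Matrix.of fun j i =>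
    (Real.sqrt (1 + 1 / n))⁻¹ *
      (if h : (j : ℕ) < n then simplexVertex n i ⟨j, h⟩ else (n : ℝ) ^ (-(1 : ℝ) / 2))
/-- D(A): the (n+1)×(n+1) block-diagonal matrix diag(A, 1), appending a 1 to the
diagonal of the n×n matrix A. -/
def blockDiag1 (n : ℕ) (A : Matrix (Fin n) (Fin n) ℝ) :
    Matrix (Fin (n + 1)) (Fin (n + 1)) ℝ :=
  Matrix.of fun i j =>
    if hi : (i : ℕ) < n then (if hj : (j : ℕ) < n then A ⟨i, hi⟩ ⟨j, hj⟩ else 0)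
    else (if (i : ℕ) = (j : ℕ) then 1 else 0)
/-- D₂(A): the (n+2)×(n+2) block-diagonal matrix diag(A, 1, 1), appending two 1s to
the diagonal of the n×n matrix A. -/
def blockDiag2 (n : ℕ) (A : Matrix (Fin n) (Fin n) ℝ) :
    Matrix (Fin (n + 2)) (Fin (n + 2)) ℝ :=
  Matrix.of fun i j =>
    if hi : (i : ℕ) < n then (if hj : (j : ℕ) < n then A ⟨i, hi⟩ ⟨j, hj⟩ else 0)
    else (if (i : ℕ) = (j : ℕ) then 1 else 0)

/-- The filter-bank matrix B of the equivariant hypersphere: the (n+1)×(n+2) matrix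
whose i-th row is ((R_Oᵀ · T_i · R_O)·c₀, s₁, s₂) ∈ ℝ^{n+2}. -/
noncomputable def filterBank (n : ℕ) (c₀ : EuclideanSpace ℝ (Fin n)) (s₁ s₂ : ℝ)
    (RO : Matrix (Fin n) (Fin n) ℝ) (T : Fin (n + 1) → Matrix (Fin n) (Fin n) ℝ) :
    Matrix (Fin (n + 1)) (Fin (n + 2)) ℝ :=
  Matrix.of fun i j =>
    if h : (j : ℕ) < n then ((ROᵀ * T i * RO).mulVec c₀) ⟨j, h⟩
    else if (j : ℕ) = n then s₁ else s₂
lemma simplexKappa_eq {n : ℕ} (hn : 1 ≤ n) :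
    simplexKappa n = -(1 + Real.sqrt (n + 1)) / (n * Real.sqrt n) := by
  have hn0 : (0 : ℝ) < n := by exact_mod_cast hn
  rw [simplexKappa, show (3 : ℝ) / 2 = 1 + 1 / 2 by norm_num, Real.rpow_add hn0,
    Real.rpow_one, ← Real.sqrt_eq_rpow]

lemma simplexMu_eq {n : ℕ} (hn : 1 ≤ n) : simplexMu n = Real.sqrt (n + 1) / Real.sqrt n := by
  have hn0 : (0 : ℝ) < n := by exact_mod_cast hn
  rw [simplexMu, ← Real.sqrt_div' _ hn0.le, add_div, div_self hn0.ne']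

lemma rpow_neg_half_eq_inv_sqrt {x : ℝ} (hx : 0 ≤ x) : x ^ (-(1 : ℝ) / 2) = (Real.sqrt x)⁻¹ := by
  rw [neg_div, Real.rpow_neg hx, Real.sqrt_eq_rpow]

lemma simplexVertex_zero_apply (n : ℕ) (j : Fin n) :
    simplexVertex n 0 j = (n : ℝ) ^ (-(1 : ℝ) / 2) := by
  simp [simplexVertex]

lemma simplexVertex_succ_apply (n : ℕ) (i j : Fin n) :
    simplexVertex n i.succ j = simplexKappa n + if j = i then simplexMu n else 0 := by
  simp [simplexVertex, Fin.ext_iff]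

lemma sum_simplexVertex {n : ℕ} (hn : 1 ≤ n) : ∑ i, simplexVertex n i = 0 := by
  ext j
  have hsqrt : 0 < Real.sqrt n := Real.sqrt_pos.mpr (by exact_mod_cast hn)
  rw [WithLp.ofLp_sum, Finset.sum_apply, Fin.sum_univ_succ, simplexVertex_zero_apply]
  simp only [simplexVertex_succ_apply, Finset.sum_add_distrib, Finset.sum_const, Finset.sum_ite_eq,
    Finset.mem_univ, if_true, Finset.card_univ, Fintype.card_fin, nsmul_eq_mul,
    rpow_neg_half_eq_inv_sqrt (Nat.cast_nonneg n), simplexKappa_eq hn, simplexMu_eq hn,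
    WithLp.ofLp_zero, Pi.zero_apply]
  field_simp
  ring

lemma vecMul_blockDiag2_of_forall_lt {n : ℕ} (A : Matrix (Fin n) (Fin n) ℝ) {v : Fin (n + 2) → ℝ}
    (hv : ∀ j : Fin (n + 2), (j : ℕ) < n → v j = 0) : v ᵥ* blockDiag2 n A = v := by
  ext k
  rw [vecMul, dotProduct, Finset.sum_eq_single k]
  · by_cases hk : (k : ℕ) < n
    · simp [hv k hk]
    · simp [blockDiag2, hk]
  · intro j _ hjk
    by_cases hj : (j : ℕ) < n
    · simp [hv j hj]
    · simp [blockDiag2, hj, Fin.val_ne_of_ne hjk]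
  · simp

lemma filterBank_apply_of_lt {n : ℕ} {c₀ : EuclideanSpace ℝ (Fin n)} {s₁ s₂ : ℝ}
    {RO : Matrix (Fin n) (Fin n) ℝ} {T : Fin (n + 1) → Matrix (Fin n) (Fin n) ℝ}
    (i : Fin (n + 1)) {j : Fin (n + 2)} (hj : (j : ℕ) < n) :
    filterBank n c₀ s₁ s₂ RO T i j = (ROᵀ *ᵥ T i *ᵥ RO *ᵥ c₀) ⟨j, hj⟩ := by
  simp only [filterBank, of_apply, dif_pos hj, Matrix.mul_assoc, mulVec_mulVec]

lemma one_vecMul_filterBank_of_lt {n : ℕ} (hn : 1 ≤ n) {c₀ : EuclideanSpace ℝ (Fin n)}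
    (s₁ s₂ : ℝ) {RO : Matrix (Fin n) (Fin n) ℝ} {T : Fin (n + 1) → Matrix (Fin n) (Fin n) ℝ}
    (hTc : ∀ i, (T i).mulVec (RO.mulVec c₀) = ‖c₀‖ • simplexVertex n i)
    {j : Fin (n + 2)} (hj : (j : ℕ) < n) : (1 ᵥ* filterBank n c₀ s₁ s₂ RO T) j = 0 := by
  have hsum : ∑ i, T i *ᵥ RO *ᵥ c₀ = 0 := by
    rw [Finset.sum_congr rfl fun i _ => hTc i, ← Finset.smul_sum, ← WithLp.ofLp_sum,
      sum_simplexVertex hn, WithLp.ofLp_zero, smul_zero]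
  simp only [vecMul, dotProduct, Pi.one_apply, one_mul, filterBank_apply_of_lt _ hj,
    ← Finset.sum_apply, ← mulVec_sum, hsum, mulVec_zero, Pi.zero_apply]

theorem invariant_dc_component_general (n : ℕ) (hn : 1 ≤ n)
    (c₀ : EuclideanSpace ℝ (Fin n)) (s₁ s₂ : ℝ)
    (RO : Matrix (Fin n) (Fin n) ℝ)
    (T : Fin (n + 1) → Matrix (Fin n) (Fin n) ℝ)
    (hTc : ∀ i, (T i).mulVec (RO.mulVec c₀) = ‖c₀‖ • simplexVertex n i)
    (R : Matrix (Fin n) (Fin n) ℝ)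
    (X : Fin (n + 2) → ℝ) :
    ∑ i : Fin (n + 1),
        (filterBank n c₀ s₁ s₂ RO T).mulVec ((blockDiag2 n R).mulVec X) i =
      ∑ i : Fin (n + 1), (filterBank n c₀ s₁ s₂ RO T).mulVec X i := by
  simp only [← one_dotProduct, dotProduct_mulVec,
    vecMul_blockDiag2_of_forall_lt R fun j hj => one_vecMul_filterBank_of_lt hn s₁ s₂ hTc hj]

/-- (O(n)-invariance of the DC component.) For every R ∈ O(n) and every input
X ∈ ℝ^{n+2}, the sum of the components of the output of the equivariant hypersphere
is O(n)-invariant: 𝟙ᵀ · (B · (D₂(R) · X)) = 𝟙ᵀ · (B · X). -/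
theorem invariant_dc_component (n : ℕ) (hn : 1 ≤ n)
    (c₀ : EuclideanSpace ℝ (Fin n)) (s₁ s₂ : ℝ)
    (RO : Matrix (Fin n) (Fin n) ℝ) (hRO : ROᵀ * RO = 1)
    (T : Fin (n + 1) → Matrix (Fin n) (Fin n) ℝ) (hT : ∀ i, (T i)ᵀ * T i = 1)
    (hTc : ∀ i, (T i).mulVec (RO.mulVec c₀) = ‖c₀‖ • simplexVertex n i)
    (R : Matrix (Fin n) (Fin n) ℝ) (hR : Rᵀ * R = 1)
    (X : Fin (n + 2) → ℝ) :
    ∑ i : Fin (n + 1),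
        (filterBank n c₀ s₁ s₂ RO T).mulVec ((blockDiag2 n R).mulVec X) i =
      ∑ i : Fin (n + 1), (filterBank n c₀ s₁ s₂ RO T).mulVec X i :=
  invariant_dc_component_general n hn c₀ s₁ s₂ RO T hTc R X
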